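/- Every finite monoid is an automaton monoid. Precisely, for a finite monoid F define σ_b : List F → List F (b ∈ F) by σ_b([]) = [] and σ_b(a :: s) = (a*b) :: s. Then: (i) σ_1 is the identity; (ii) σ_{b*b'} = σ_{b'} ∘ σ_b for all b, b' ∈ F; (iii) the map b ↦ σ_b is injective. Moreover these σ_b are exactly the production functions of the Mealy automaton associated with the normalisation N̄(a,b) = (1, a*b) on Γ = F, so F is isomorphic to the monoid of functions generated by this Mealy automaton. -/
import Mathlib


namespace Stmt11

variable {α : Type}

/-- Production function of the Mealy automaton associated with
`N̄(a,b) = (τ_a(b), σ_b(a))`: `σ_x([]) = []`,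
`σ_x(i :: s) = σ_x(i) :: σ_{τ_i(x)}(s)`. -/
def prodFn (Nb : α → α → α × α) : α → List α → List α
  | _, [] => []
  | x, i :: s => (Nb i x).2 :: prodFn Nb ((Nb i x).1) s

variable {F : Type} [Monoid F]

/-- The function `σ_b` on words over a monoid: multiply the first letter by `b` on the
right. -/
def mySigma (b : F) : List F → List F
  | [] => []
  | a :: s => (a * b) :: s

/-- The two-letter normalisation `N̄(a,b) = (1, a*b)` of a finite monoid. -/
def finNb (a b : F) : F × F := (1, a * b)

lemma mySigma_one : mySigma (1 : F) = id := by
  funext s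
  cases s with
  | nil => rfl
  | cons a s => simp [mySigma]

lemma mySigma_mul (b b' : F) : mySigma (b * b') = mySigma b' ∘ mySigma b := by
  funext s
  cases s with
  | nil => rfl
  | cons a s => simp [mySigma, mul_assoc]

lemma mySigma_inj : Function.Injective (fun b : F => mySigma b) := by
  intro b b' h
  have := congrFun h [1]
  simpa [mySigma] using this

lemma prodFn_one (s : List F) : prodFn finNb 1 s = s := by
  induction s with
  | nil => rfl
  | cons a s ih => simp [prodFn, finNb, ih]

lemma mySigma_eq_prodFn (b : F) : mySigma b = prodFn finNb b := by
  funext s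
  cases s with
  | nil => rfl
  | cons a s => simp [mySigma, prodFn, finNb, prodFn_one]

/-- The monoid hom `F →* (Function.End (List F))ᵐᵒᵖ`. -/
def sigmaHom : F →* (Function.End (List F))ᵐᵒᵖ where
  toFun b := MulOpposite.op (show Function.End (List F) from mySigma b)
  map_one' := by
    simp [mySigma_one]; rfl
  map_mul' b b' := by
    simp only [mySigma_mul]
    rfl

/-- Example `ex-finite`: every finite monoid `F` is an automaton
monoid: (i) `σ_1 = id`; (ii) `σ_{b*b'} = σ_{b'} ∘ σ_b`; (iii) `b ↦ σ_b` is injective;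
(iv) the `σ_b` are exactly the production functions of the Mealy automaton associated
with `N̄(a,b) = (1, a*b)`; hence (v) `F` is isomorphic to the monoid of functions
generated by this Mealy automaton. -/
theorem finite_monoid_is_automaton_monoid [Fintype F] :
    mySigma (1 : F) = id ∧
    (∀ b b' : F, mySigma (b * b') = mySigma b' ∘ mySigma b) ∧
    Function.Injective (fun b : F => mySigma b) ∧
    (∀ b : F, mySigma b = prodFn finNb b) ∧
    Nonempty
      (F ≃* (Submonoid.closure
        (Set.range fun b : F =>
          MulOpposite.op (show Function.End (List F) from mySigma b)))) := by
  refine ⟨mySigma_one, mySigma_mul, mySigma_inj, mySigma_eq_prodFn, ?_⟩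
  have hinj : Function.Injective (sigmaHom (F := F)) := by
    intro b b' h
    apply mySigma_inj
    have := congrArg MulOpposite.unop h
    exact this
  have hr : Set.range (sigmaHom (F := F)) =
      (Set.range fun b : F =>
        MulOpposite.op (show Function.End (List F) from mySigma b)) := rfl
  have hcl : Submonoid.closure
      (Set.range fun b : F =>
        MulOpposite.op (show Function.End (List F) from mySigma b)) =
      MonoidHom.mrange (sigmaHom (F := F)) := by
    rw [← hr, ← MonoidHom.coe_mrange, Submonoid.closure_eq]
  have hbij : Function.Bijective (sigmaHom (F := F)).mrangeRestrict := by
    constructor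
    · intro b b' h
      apply hinj
      exact congrArg Subtype.val h
    · exact MonoidHom.mrangeRestrict_surjective _
  exact ⟨(MulEquiv.ofBijective _ hbij).trans (MulEquiv.submonoidCongr (by rw [hcl]))⟩

end Stmt11
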